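/- Define s₁ acting on (f₀, f₁) ∈ (ℂ*)² with parameters a₀, a₁, b ∈ ℂ* by s₁(f₀) = f₀(a₀a₁ + b f₀ f₁)/(a₁(a₀ + b f₀ f₁)), s₁(f₁) = a₁ f₁ (a₀ + b f₀ f₁)/(a₀a₁ + b f₀ f₁), together with s₁: (a₀,a₁,b) ↦ (a₀a₁², a₁⁻¹, a₁b). Then s₁ is an involution: applying s₁ twice returns (a₀, a₁, b, f₀, f₁) to its original values (away from the singular locus where denominators vanish). -/

import Mathlib

/-! `s₁` multiplies `f₀` by `r = (a₀ a₁ + b p) / (a₁ (a₀ + b p))`, where `p = f₀ f₁`, and divides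
`f₁` by it. So `p` is invariant, and on the transformed parameters `(a₀ a₁², a₁⁻¹, a₁ b)` the same
formula gives `r⁻¹`: the second application undoes the first. -/

section

variable {K : Type*} [Field K]

def s₁ : K × K × K × K × K → K × K × K × K × K
  | (a₀, a₁, b, f₀, f₁) =>
    (a₀ * a₁ ^ 2, a₁⁻¹, a₁ * b,
     f₀ * (a₀ * a₁ + b * f₀ * f₁) / (a₁ * (a₀ + b * f₀ * f₁)),
     a₁ * f₁ * (a₀ + b * f₀ * f₁) / (a₀ * a₁ + b * f₀ * f₁))

def s₁Ratio (a₀ a₁ b p : K) : K := (a₀ * a₁ + b * p) / (a₁ * (a₀ + b * p))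

theorem s₁_apply (a₀ a₁ b f₀ f₁ : K) :
    s₁ (a₀, a₁, b, f₀, f₁) =
      (a₀ * a₁ ^ 2, a₁⁻¹, a₁ * b,
       f₀ * s₁Ratio a₀ a₁ b (f₀ * f₁), f₁ * (s₁Ratio a₀ a₁ b (f₀ * f₁))⁻¹) := by
  simp only [s₁, s₁Ratio, inv_div, Prod.mk.injEq, true_and]
  constructor <;> ring

theorem s₁Ratio_ne_zero {a₀ a₁ b p : K} (h₁ : a₁ ≠ 0) (hd₁ : a₀ + b * p ≠ 0)
    (hd₂ : a₀ * a₁ + b * p ≠ 0) : s₁Ratio a₀ a₁ b p ≠ 0 :=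
  div_ne_zero hd₂ (mul_ne_zero h₁ hd₁)

theorem s₁Ratio_s₁_params {a₁ : K} (a₀ b p : K) (h₁ : a₁ ≠ 0) :
    s₁Ratio (a₀ * a₁ ^ 2) a₁⁻¹ (a₁ * b) p = (s₁Ratio a₀ a₁ b p)⁻¹ := by
  simp only [s₁Ratio, inv_div]
  field_simp

theorem s₁_s₁ {a₀ a₁ b f₀ f₁ : K} (h₁ : a₁ ≠ 0) (hd₁ : a₀ + b * f₀ * f₁ ≠ 0)
    (hd₂ : a₀ * a₁ + b * f₀ * f₁ ≠ 0) :
    s₁ (s₁ (a₀, a₁, b, f₀, f₁)) = (a₀, a₁, b, f₀, f₁) := by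
  have hr : s₁Ratio a₀ a₁ b (f₀ * f₁) ≠ 0 :=
    s₁Ratio_ne_zero h₁ (by rwa [← mul_assoc]) (by rwa [← mul_assoc])
  have hprod : f₀ * s₁Ratio a₀ a₁ b (f₀ * f₁) * (f₁ * (s₁Ratio a₀ a₁ b (f₀ * f₁))⁻¹) = f₀ * f₁ := by
    field_simp
  rw [s₁_apply, s₁_apply, hprod, s₁Ratio_s₁_params _ _ _ h₁, inv_inv, inv_inv,
    mul_inv_cancel_right₀ hr, inv_mul_cancel_right₀ hr]
  simp only [Prod.mk.injEq, and_true, true_and]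
  constructor <;> field_simp

end

theorem s1_birational_involution
    (a₀ a₁ b f₀ f₁ : ℂ) (h₁ : a₁ ≠ 0)
    (hd₁ : a₀ + b * f₀ * f₁ ≠ 0) (hd₂ : a₀ * a₁ + b * f₀ * f₁ ≠ 0) :
    let S : ℂ × ℂ × ℂ × ℂ × ℂ → ℂ × ℂ × ℂ × ℂ × ℂ :=
      fun x => match x with
      | (a₀, a₁, b, f₀, f₁) =>
        (a₀ * a₁ ^ 2, a₁⁻¹, a₁ * b,
         f₀ * (a₀ * a₁ + b * f₀ * f₁) / (a₁ * (a₀ + b * f₀ * f₁)),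
         a₁ * f₁ * (a₀ + b * f₀ * f₁) / (a₀ * a₁ + b * f₀ * f₁))
    S (S (a₀, a₁, b, f₀, f₁)) = (a₀, a₁, b, f₀, f₁) :=
  s₁_s₁ h₁ hd₁ hd₂
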